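/- arXiv:1403.7368 — 3 statements merged into one kernel-verified Lean document; each statement's English description precedes it below -/
import Mathlib

section
/- For every d ≥ 1 and every multi-index α ∈ ℕ^d, one has U_α(X) = − V_α'(X) for all X ≥ 0, where V_α' is the derivative of V_α. -/
open MeasureTheory

noncomputable section

/-- The `n`-th Laguerre polynomial `L_n(x) = Σ_{k=0}^n (n choose k) (−x)^k / k!`. -/
def laguerreFun (n : ℕ) (x : ℝ) : ℝ :=
  ∑ k ∈ Finset.range (n + 1), (n.choose k : ℝ) * (-x) ^ k / (k.factorial : ℝ)

/-- `T_n(X) = Σ_{k=0}^{n−1} (−1)^k L_k(X) + ((−1)^n/2) L_n(X)`. -/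
def Tfun (n : ℕ) (X : ℝ) : ℝ :=
  (∑ k ∈ Finset.range n, (-1 : ℝ) ^ k * laguerreFun k X) +
    (-1 : ℝ) ^ n / 2 * laguerreFun n X

/-- `V_α(X) = 4 e^{−X/2} Σ_{k=0}^{d−1} C(d−1,k) T_{|α|+k}(X)`. -/
def Vfun (d : ℕ) (α : Fin d → ℕ) (X : ℝ) : ℝ :=
  4 * Real.exp (-X / 2) *
    ∑ k ∈ Finset.range d, ((d - 1).choose k : ℝ) * Tfun ((∑ j, α j) + k) X

/-- `U_α(X) = (−1)^{|α|} e^{−X/2} ∫_{Ω_d(X)} L_{α_d}(X − Σ t_j) ∏_{j<d-1} L_{α_j}(t_j) dt`,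
for a multi-index `α ∈ ℕ^{d+1}`, the integral being taken over the simplex
`{t ∈ ℝ^d : t_j ≥ 0, Σ t_j ≤ X}` (for `d = 0` it reduces to `(−1)^{|α|} e^{−X/2} L_{α_0}(X)`). -/
def Ufun (d : ℕ) (α : Fin (d + 1) → ℕ) (X : ℝ) : ℝ :=
  (-1 : ℝ) ^ (∑ j, α j) * Real.exp (-X / 2) *
    ∫ t in {t : Fin d → ℝ | (∀ j, 0 ≤ t j) ∧ (∑ j, t j) ≤ X},
      laguerreFun (α (Fin.last d)) (X - ∑ j, t j) *
        ∏ j : Fin d, laguerreFun (α j.castSucc) (t j)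

/-!
Write `L_n = ∑ C(n,k) e_k` with `e_k(x) = (-x)^k / k!`. Since `∫₀^X e_a(s) e_b(X - s) ds =
-e_{a+b+1}(X)` (integration by parts), Vandermonde's identity turns the convolution of two Laguerre
polynomials into `∫₀^X L_m(s) L_n(X - s) ds = L_{m+n}(X) - L_{m+n+1}(X)`. Integrating over the
simplex one coordinate at a time makes the integral in `U_α` an iterated convolution, hence equal
to `∑_k C(d,k) (-1)^k L_{|α|+k}(X)` by Pascal's rule. On the other side, `L_{n+1}' - L_n' = -L_n`
gives `(e^{-X/2} T_n)' = -(-1)^n e^{-X/2} L_n / 4`, and the two sides agree term by term.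
-/

open Finset intervalIntegral

theorem sum_choose_mul_sum_choose_mul_add {R : Type*} [CommSemiring R] (m n : ℕ) (g : ℕ → R) :
    ∑ a ∈ range (m + 1), (m.choose a : R) *
        ∑ b ∈ range (n + 1), (n.choose b : R) * g (a + b) =
      ∑ j ∈ range (m + n + 1), ((m + n).choose j : R) * g j := by
  induction m generalizing g with
  | zero => simp
  | succ m ih =>
    have hshift := ih (fun j => g (j + 1))
    simp only [add_right_comm _ _ 1] at hshift
    rw [sum_choose_succ_mul (fun a _ => ∑ b ∈ range (n + 1), (n.choose b : R) * g (a + b)),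
      ih, hshift, add_right_comm m 1 n,
      sum_choose_succ_mul (fun j _ => g j)]

theorem sum_choose_mul_neg_one_pow_mul_sub_succ {R : Type*} [CommRing R] (d : ℕ) (a : ℕ → R) :
    ∑ k ∈ range (d + 1), (d.choose k : R) * ((-1) ^ k * (a k - a (k + 1))) =
      ∑ k ∈ range (d + 2), ((d + 1).choose k : R) * ((-1) ^ k * a k) := by
  rw [sum_choose_succ_mul (fun k _ => (-1) ^ k * a k), ← sum_add_distrib]
  refine sum_congr rfl fun k _ => ?_
  ring

def expNegTerm (k : ℕ) (x : ℝ) : ℝ :=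
  (-x) ^ k / k.factorial

@[fun_prop]
theorem continuous_expNegTerm (k : ℕ) : Continuous (expNegTerm k) := by
  unfold expNegTerm
  fun_prop

theorem expNegTerm_succ_zero (k : ℕ) : expNegTerm (k + 1) 0 = 0 := by
  simp [expNegTerm]

theorem hasDerivAt_expNegTerm_succ (k : ℕ) (x : ℝ) :
    HasDerivAt (expNegTerm (k + 1)) (-expNegTerm k x) x := by
  have h : HasDerivAt (expNegTerm (k + 1))
      ((k + 1 : ℕ) * (-x) ^ k * (-1) / (k + 1).factorial) x :=
    ((hasDerivAt_neg x).pow (k + 1)).div_const _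
  refine h.congr_deriv ?_
  rw [expNegTerm, Nat.factorial_succ]
  push_cast
  field_simp

theorem integral_expNegTerm_mul_expNegTerm_sub (a b : ℕ) (X : ℝ) :
    ∫ s in (0 : ℝ)..X, expNegTerm a s * expNegTerm b (X - s) = -expNegTerm (a + b + 1) X := by
  induction b generalizing a with
  | zero =>
    have hF : ∀ s ∈ Set.uIcc 0 X,
        HasDerivAt (fun s => -expNegTerm (a + 1) s) (expNegTerm a s) s :=
      fun s _ => (hasDerivAt_expNegTerm_succ a s).neg.congr_deriv (neg_neg _)
    have hone : ∀ y, expNegTerm 0 y = 1 := by simp [expNegTerm]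
    simp only [hone, mul_one]
    rw [integral_eq_sub_of_hasDerivAt hF ((continuous_expNegTerm a).intervalIntegrable _ _)]
    simp [expNegTerm_succ_zero]
  | succ b ih =>
    have hu : ∀ s ∈ Set.uIcc 0 X,
        HasDerivAt (fun s => expNegTerm (b + 1) (X - s)) (expNegTerm b (X - s)) s := fun s _ =>
      ((hasDerivAt_expNegTerm_succ b (X - s)).comp_const_sub X s).congr_deriv (neg_neg _)
    have hv : ∀ s ∈ Set.uIcc 0 X,
        HasDerivAt (fun s => -expNegTerm (a + 1) s) (expNegTerm a s) s :=
      fun s _ => (hasDerivAt_expNegTerm_succ a s).neg.congr_deriv (neg_neg _)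
    have hparts := integral_mul_deriv_eq_deriv_mul hu hv
      ((by fun_prop : Continuous fun s => expNegTerm b (X - s)).intervalIntegrable _ _)
      ((continuous_expNegTerm a).intervalIntegrable _ _)
    simp only [sub_self, expNegTerm_succ_zero, neg_zero, mul_zero, zero_mul, sub_zero, mul_neg,
      intervalIntegral.integral_neg] at hparts
    rw [integral_congr fun s _ => mul_comm _ _, hparts,
      integral_congr fun s _ => mul_comm _ _, ih]
    ring_nf

theorem laguerreFun_eq_sum_expNegTerm (n : ℕ) (x : ℝ) :
    laguerreFun n x = ∑ k ∈ range (n + 1), (n.choose k : ℝ) * expNegTerm k x := by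
  simp only [laguerreFun, expNegTerm, mul_div_assoc]

@[fun_prop]
theorem continuous_laguerreFun (n : ℕ) : Continuous (laguerreFun n) := by
  simp_rw [funext (laguerreFun_eq_sum_expNegTerm n)]
  fun_prop

theorem laguerreFun_succ_sub (n : ℕ) (x : ℝ) :
    laguerreFun (n + 1) x - laguerreFun n x =
      ∑ k ∈ range (n + 1), (n.choose k : ℝ) * expNegTerm (k + 1) x := by
  rw [laguerreFun_eq_sum_expNegTerm, laguerreFun_eq_sum_expNegTerm,
    sum_choose_succ_mul (fun k _ => expNegTerm k x)]
  ring

theorem hasDerivAt_laguerreFun_succ_sub (n : ℕ) (x : ℝ) :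
    HasDerivAt (fun y => laguerreFun (n + 1) y - laguerreFun n y) (-laguerreFun n x) x := by
  simp_rw [laguerreFun_succ_sub, laguerreFun_eq_sum_expNegTerm, ← sum_neg_distrib, ← mul_neg]
  exact HasDerivAt.fun_sum fun k _ => (hasDerivAt_expNegTerm_succ k x).const_mul _

theorem integral_laguerreFun_mul_laguerreFun_sub (m n : ℕ) (X : ℝ) :
    ∫ s in (0 : ℝ)..X, laguerreFun m s * laguerreFun n (X - s) =
      laguerreFun (m + n) X - laguerreFun (m + n + 1) X := by
  calc ∫ s in (0 : ℝ)..X, laguerreFun m s * laguerreFun n (X - s)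
      = ∑ a ∈ range (m + 1), (m.choose a : ℝ) * ∑ b ∈ range (n + 1), (n.choose b : ℝ) *
          ∫ s in (0 : ℝ)..X, expNegTerm a s * expNegTerm b (X - s) := by
        simp_rw [laguerreFun_eq_sum_expNegTerm, sum_mul_sum]
        rw [intervalIntegral.integral_finsetSum fun a _ => ?_]
        · refine sum_congr rfl fun a _ => ?_
          rw [intervalIntegral.integral_finsetSum fun b _ => ?_, mul_sum]
          · refine sum_congr rfl fun b _ => ?_
            rw [← intervalIntegral.integral_const_mul, ← intervalIntegral.integral_const_mul]
            exact integral_congr fun s _ => by ring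
          · exact Continuous.intervalIntegrable (by fun_prop) _ _
        · exact Continuous.intervalIntegrable (by fun_prop) _ _
    _ = -∑ j ∈ range (m + n + 1), ((m + n).choose j : ℝ) * expNegTerm (j + 1) X := by
        rw [← sum_choose_mul_sum_choose_mul_add m n fun j => expNegTerm (j + 1) X]
        simp only [integral_expNegTerm_mul_expNegTerm_sub, mul_neg, sum_neg_distrib]
    _ = laguerreFun (m + n) X - laguerreFun (m + n + 1) X := by
        rw [← laguerreFun_succ_sub, neg_sub]

theorem Tfun_succ (n : ℕ) (x : ℝ) :
    Tfun (n + 1) x = Tfun n x - (-1) ^ n / 2 * (laguerreFun (n + 1) x - laguerreFun n x) := by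
  simp only [Tfun, sum_range_succ, pow_succ]
  ring

theorem hasDerivAt_Tfun (n : ℕ) (x : ℝ) :
    HasDerivAt (Tfun n) (Tfun n x / 2 - (-1) ^ n / 4 * laguerreFun n x) x := by
  induction n with
  | zero =>
    have hconst : Tfun 0 = fun _ => 1 / 2 := by
      funext y
      simp [Tfun, laguerreFun]
    rw [hconst]
    refine (hasDerivAt_const x (1 / 2 : ℝ)).congr_deriv ?_
    norm_num [laguerreFun]
  | succ n ih =>
    rw [show Tfun (n + 1) = _ from funext (Tfun_succ n)]
    refine (ih.sub ((hasDerivAt_laguerreFun_succ_sub n x).const_mul ((-1) ^ n / 2))).congr_deriv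
      ?_
    ring

theorem hasDerivAt_exp_mul_Tfun (n : ℕ) (x : ℝ) :
    HasDerivAt (fun y => Real.exp (-y / 2) * Tfun n y)
      (-((-1) ^ n / 4) * (Real.exp (-x / 2) * laguerreFun n x)) x := by
  have hexp : HasDerivAt (fun y => Real.exp (-y / 2)) (Real.exp (-x / 2) * (-1 / 2)) x :=
    ((hasDerivAt_neg x).div_const 2).exp
  refine (hexp.mul (hasDerivAt_Tfun n x)).congr_deriv ?_
  ring

def cornerSimplex (d : ℕ) (X : ℝ) : Set (Fin d → ℝ) :=
  {t | (∀ j, 0 ≤ t j) ∧ ∑ j, t j ≤ X}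

theorem isClosed_cornerSimplex (d : ℕ) (X : ℝ) : IsClosed (cornerSimplex d X) := by
  simp only [cornerSimplex, Set.ofPred_and, Set.ofPred_forall]
  exact (isClosed_iInter fun j => isClosed_le continuous_const (continuous_apply j)).inter
    (isClosed_le (by fun_prop) continuous_const)

theorem isCompact_cornerSimplex (d : ℕ) (X : ℝ) : IsCompact (cornerSimplex d X) := by
  refine (isCompact_Icc (a := 0) (b := fun _ => X)).of_isClosed_subset
    (isClosed_cornerSimplex d X) fun t ⟨hnonneg, hsum⟩ => ⟨hnonneg, fun j => ?_⟩
  exact (single_le_sum (fun i _ => hnonneg i) (mem_univ j)).trans hsum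

theorem cons_mem_cornerSimplex_iff {d : ℕ} {X s : ℝ} {u : Fin d → ℝ} :
    (Fin.cons s u : Fin (d + 1) → ℝ) ∈ cornerSimplex (d + 1) X ↔
      s ∈ Set.Icc 0 X ∧ u ∈ cornerSimplex d (X - s) := by
  simp only [cornerSimplex, Set.mem_ofPred_eq, Fin.forall_fin_succ, Fin.cons_zero, Fin.cons_succ,
    Fin.sum_cons, Set.mem_Icc, le_sub_iff_add_le']
  constructor
  · rintro ⟨⟨hs, hu⟩, hsum⟩
    exact ⟨⟨hs, by linarith [sum_nonneg fun j (_ : j ∈ univ) => hu j]⟩, hu, hsum⟩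
  · rintro ⟨⟨hs, -⟩, hu, hsum⟩
    exact ⟨⟨hs, hu⟩, hsum⟩

theorem setIntegral_cornerSimplex_succ {E : Type*} [NormedAddCommGroup E] [NormedSpace ℝ E]
    {d : ℕ} {X : ℝ} {f : (Fin (d + 1) → ℝ) → E}
    (hf : IntegrableOn f (cornerSimplex (d + 1) X)) :
    ∫ t in cornerSimplex (d + 1) X, f t =
      ∫ s in Set.Icc 0 X, ∫ u in cornerSimplex d (X - s), f (Fin.cons s u) := by
  have hS : MeasurableSet (cornerSimplex (d + 1) X) := (isClosed_cornerSimplex _ _).measurableSet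
  set g := (cornerSimplex (d + 1) X).indicator f
  have hmp := (volume_preserving_piFinSuccAbove (fun _ : Fin (d + 1) => ℝ) 0).symm
  have hsymm : ∀ p : ℝ × (Fin d → ℝ),
      (MeasurableEquiv.piFinSuccAbove (fun _ => ℝ) 0).symm p = Fin.cons p.1 p.2 := fun p => by
    simp [MeasurableEquiv.piFinSuccAbove_symm_apply, Fin.insertNthEquiv, Fin.insertNth_zero']
  have hg : Integrable (fun p : ℝ × (Fin d → ℝ) => g (Fin.cons p.1 p.2))
      (volume.prod volume) := by
    rw [← Measure.volume_eq_prod]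
    simp_rw [← hsymm]
    exact (hmp.integrable_comp_emb (MeasurableEquiv.measurableEmbedding _)).mpr
      (hf.integrable_indicator hS)
  have hslice : ∀ s, ∫ u, g (Fin.cons s u) = (Set.Icc 0 X).indicator
      (fun s => ∫ u in cornerSimplex d (X - s), f (Fin.cons s u)) s := fun s => by
    by_cases hs : s ∈ Set.Icc 0 X
    · rw [Set.indicator_of_mem hs,
        ← MeasureTheory.integral_indicator (isClosed_cornerSimplex _ _).measurableSet]
      congr 1 with u
      by_cases hu : u ∈ cornerSimplex d (X - s)
      · rw [Set.indicator_of_mem hu]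
        exact Set.indicator_of_mem (cons_mem_cornerSimplex_iff.2 ⟨hs, hu⟩) f
      · rw [Set.indicator_of_notMem hu]
        exact Set.indicator_of_notMem (fun h => hu (cons_mem_cornerSimplex_iff.1 h).2) f
    · rw [Set.indicator_of_notMem hs, ← integral_zero (Fin d → ℝ) E]
      congr 1 with u
      exact Set.indicator_of_notMem (fun h => hs (cons_mem_cornerSimplex_iff.1 h).1) f
  calc ∫ t in cornerSimplex (d + 1) X, f t
      = ∫ p : ℝ × (Fin d → ℝ), g (Fin.cons p.1 p.2) := by
        rw [← MeasureTheory.integral_indicator hS, ← hmp.integral_comp', Measure.volume_eq_prod]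
        simp_rw [hsymm]
        rfl
    _ = ∫ s in Set.Icc 0 X, ∫ u in cornerSimplex d (X - s), f (Fin.cons s u) := by
        rw [Measure.volume_eq_prod, integral_prod _ hg,
          ← MeasureTheory.integral_indicator measurableSet_Icc]
        simp_rw [hslice]

theorem setIntegral_cornerSimplex_laguerreFun (d : ℕ) (α : Fin (d + 1) → ℕ) {X : ℝ}
    (hX : 0 ≤ X) :
    ∫ t in cornerSimplex d X, laguerreFun (α (Fin.last d)) (X - ∑ j, t j) *
        ∏ j : Fin d, laguerreFun (α j.castSucc) (t j) =
      ∑ k ∈ range (d + 1),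
        (d.choose k : ℝ) * ((-1) ^ k * laguerreFun ((∑ j, α j) + k) X) := by
  induction d generalizing X with
  | zero =>
    have huniv : cornerSimplex 0 X = Set.univ := by simp [cornerSimplex, hX]
    simp [huniv, Measure.real, volume_pi]
  | succ d ih =>
    set M := ∑ j, Fin.tail α j
    have hcons : ∀ s (u : Fin d → ℝ),
        laguerreFun (α (Fin.last (d + 1))) (X - ∑ j, (Fin.cons s u : Fin (d + 1) → ℝ) j) *
            ∏ j : Fin (d + 1),
              laguerreFun (α j.castSucc) ((Fin.cons s u : Fin (d + 1) → ℝ) j) =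
          laguerreFun (α 0) s * (laguerreFun (Fin.tail α (Fin.last d)) (X - s - ∑ j, u j) *
            ∏ j : Fin d, laguerreFun (Fin.tail α j.castSucc) (u j)) := fun s u => by
      simp only [Fin.sum_cons, Fin.prod_univ_succ, Fin.cons_zero, Fin.cons_succ,
        Fin.castSucc_zero, Fin.tail, Fin.succ_last, ← Fin.succ_castSucc, sub_add_eq_sub_sub]
      ring
    have hconv : ∫ s in (0 : ℝ)..X, laguerreFun (α 0) s *
          ∑ k ∈ range (d + 1), (d.choose k : ℝ) * ((-1) ^ k * laguerreFun (M + k) (X - s)) =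
        ∑ k ∈ range (d + 1), (d.choose k : ℝ) *
          ((-1) ^ k * (laguerreFun (α 0 + M + k) X - laguerreFun (α 0 + M + k + 1) X)) := by
      simp_rw [mul_sum]
      rw [intervalIntegral.integral_finsetSum fun k _ =>
        Continuous.intervalIntegrable (by fun_prop) _ _]
      refine sum_congr rfl fun k _ => ?_
      rw [add_assoc (α 0) M k, ← integral_laguerreFun_mul_laguerreFun_sub,
        ← intervalIntegral.integral_const_mul, ← intervalIntegral.integral_const_mul]
      exact integral_congr fun s _ => by ring
    rw [setIntegral_cornerSimplex_succ ((Continuous.continuousOn (by fun_prop)).integrableOn_compact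
      (isCompact_cornerSimplex _ _))]
    simp_rw [hcons, MeasureTheory.integral_const_mul]
    rw [setIntegral_congr_fun measurableSet_Icc fun s hs => by
        rw [ih (Fin.tail α) (sub_nonneg.2 hs.2)],
      integral_Icc_eq_integral_Ioc, ← intervalIntegral.integral_of_le hX, hconv,
      Fin.sum_univ_succ]
    exact sum_choose_mul_neg_one_pow_mul_sub_succ d fun k => laguerreFun (α 0 + M + k) X

theorem hasDerivAt_Vfun (d : ℕ) (α : Fin (d + 1) → ℕ) (x : ℝ) :
    HasDerivAt (Vfun (d + 1) α) (-(Real.exp (-x / 2) *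
      ∑ k ∈ range (d + 1), (d.choose k : ℝ) * (-1) ^ ((∑ j, α j) + k) *
        laguerreFun ((∑ j, α j) + k) x)) x := by
  have hV : Vfun (d + 1) α = fun y => ∑ k ∈ range (d + 1),
      4 * (d.choose k : ℝ) * (Real.exp (-y / 2) * Tfun ((∑ j, α j) + k) y) := by
    funext y
    simp only [Vfun, Nat.add_sub_cancel, mul_sum]
    exact sum_congr rfl fun k _ => by ring
  rw [hV]
  refine (HasDerivAt.fun_sum fun k _ => (hasDerivAt_exp_mul_Tfun _ x).const_mul _).congr_deriv ?_
  rw [mul_sum, ← sum_neg_distrib]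
  exact sum_congr rfl fun k _ => by ring

theorem U_eq_neg_deriv_V (d : ℕ) (α : Fin (d + 1) → ℕ) :
    ∀ X : ℝ, 0 ≤ X → Ufun d α X = -(deriv (Vfun (d + 1) α) X) := by
  intro X hX
  rw [(hasDerivAt_Vfun d α X).deriv, neg_neg, Ufun, ← cornerSimplex,
    setIntegral_cornerSimplex_laguerreFun d α hX]
  simp only [mul_sum, pow_add]
  exact sum_congr rfl fun k _ => by ring
end
end

section
/- For all m, n ∈ ℕ and all X ≥ 0, the Laguerre polynomials satisfy the convolution identity ∫_0^X L_m(t) L_n(X − t) dt = L_{m+n}(X) − L_{m+n+1}(X). -/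
/-!
Let `B` be the linear map on real polynomials sending `Xᵏ` to the function `y ↦ yᵏ / k!`, so
that `L_n(x) = B((1 + X)ⁿ)(-x)`. The beta integral `∫₀ˣ tʲ/j! · (x - t)ᵏ/k! dt = xʲ⁺ᵏ⁺¹/(j+k+1)!`
says that on monomials the convolution `∫₀ˣ B p(-t) · B q(-(x - t)) dt` equals `-B(X p q)(-x)`,
hence on all polynomials by bilinearity. For `p = (1 + X)ᵐ`, `q = (1 + X)ⁿ` the identity becomes
`-X (1 + X)ᵐ⁺ⁿ = (1 + X)ᵐ⁺ⁿ - (1 + X)ᵐ⁺ⁿ⁺¹`.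
-/

open MeasureTheory

noncomputable section

section BorelTransform

open Polynomial Nat

lemma HasDerivAt.pow_succ_div_factorial {f : ℝ → ℝ} {f' t : ℝ} (hf : HasDerivAt f f' t) (k : ℕ) :
    HasDerivAt (fun t => f t ^ (k + 1) / (k + 1)!) (f t ^ k / k ! * f') t := by
  refine ((hf.pow (k + 1)).div_const _).congr_deriv ?_
  rw [factorial_succ]
  push_cast
  field_simp

lemma integral_neg_pow_div_factorial_mul_neg_sub_pow_div_factorial (x : ℝ) (j k : ℕ) :
    ∫ t in (0 : ℝ)..x, (-t) ^ j / j ! * ((-(x - t)) ^ k / k !) =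
      -((-x) ^ (j + k + 1) / (j + k + 1)!) := by
  have hv (j : ℕ) (t : ℝ) :
      HasDerivAt (fun t : ℝ => -((-t) ^ (j + 1) / (j + 1)!)) ((-t) ^ j / j !) t :=
    ((hasDerivAt_neg t).pow_succ_div_factorial j).neg.congr_deriv (by simp)
  induction k generalizing j with
  | zero =>
    rw [intervalIntegral.integral_eq_sub_of_hasDerivAt (fun t _ => by simpa using hv j t)
      (by apply Continuous.intervalIntegrable; fun_prop)]
    simp
  | succ k ih =>
    have hu (t : ℝ) : HasDerivAt (fun t : ℝ => (-(x - t)) ^ (k + 1) / (k + 1)!)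
        ((-(x - t)) ^ k / k !) t := by
      simpa using ((hasDerivAt_id t).const_sub x).neg.pow_succ_div_factorial k
    have hparts := intervalIntegral.integral_mul_deriv_eq_deriv_mul (a := 0) (b := x)
      (fun t _ => hu t) (fun t _ => hv j t)
      (by apply Continuous.intervalIntegrable; fun_prop)
      (by apply Continuous.intervalIntegrable; fun_prop)
    simp_rw [mul_comm ((-_) ^ j / _ : ℝ)]
    rw [hparts, show j + (k + 1) + 1 = j + 1 + k + 1 by ring, ← ih (j + 1)]
    simp [intervalIntegral.integral_neg, mul_comm]

def borelTransform : ℝ[X] →ₗ[ℝ] ℝ → ℝ :=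
  lsum fun k => LinearMap.toSpanSingleton ℝ (ℝ → ℝ) fun y => y ^ k / k !

lemma borelTransform_monomial (k : ℕ) (a y : ℝ) :
    borelTransform (monomial k a) y = a * (y ^ k / k !) := by
  simp [borelTransform]

lemma continuous_borelTransform (p : ℝ[X]) : Continuous (borelTransform p) := by
  induction p using Polynomial.induction_on' with
  | add p q hp hq => simpa using hp.add hq
  | monomial k a => simpa [funext (borelTransform_monomial k a)] using by fun_prop

lemma laguerreFun_eq_borelTransform (n : ℕ) (x : ℝ) :
    laguerreFun n x = borelTransform ((1 + X) ^ n) (-x) := by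
  have hdeg : ((1 + X : ℝ[X]) ^ n).natDegree < n + 1 := by
    compute_degree!
  rw [borelTransform, lsum_apply, sum_over_range' _ (fun k => map_zero _) _ hdeg, laguerreFun,
    Finset.sum_apply]
  simp [coeff_one_add_X_pow, mul_div_assoc]

lemma integral_borelTransform_mul_borelTransform (p q : ℝ[X]) (x : ℝ) :
    ∫ t in (0 : ℝ)..x, borelTransform p (-t) * borelTransform q (-(x - t)) =
      -borelTransform (X * p * q) (-x) := by
  have hint (p q : ℝ[X]) : IntervalIntegrable
      (fun t => borelTransform p (-t) * borelTransform q (-(x - t))) volume 0 x := by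
    have := continuous_borelTransform p
    have := continuous_borelTransform q
    apply Continuous.intervalIntegrable
    fun_prop
  induction p using Polynomial.induction_on' with
  | add p₁ p₂ h₁ h₂ =>
    simp only [map_add, Pi.add_apply, mul_add, add_mul, neg_add]
    rw [intervalIntegral.integral_add (hint _ _) (hint _ _), h₁, h₂]
  | monomial j a =>
  induction q using Polynomial.induction_on' with
  | add q₁ q₂ h₁ h₂ =>
    simp only [map_add, Pi.add_apply, mul_add, neg_add]
    rw [intervalIntegral.integral_add (hint _ _) (hint _ _), h₁, h₂]
  | monomial k b =>
    simp only [X_mul_monomial, monomial_mul_monomial, borelTransform_monomial]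
    calc _ = a * b * ∫ t in (0 : ℝ)..x, (-t) ^ j / j ! * ((-(x - t)) ^ k / k !) := by
          rw [← intervalIntegral.integral_const_mul]
          congr 1 with t
          ring
      _ = _ := by
          rw [integral_neg_pow_div_factorial_mul_neg_sub_pow_div_factorial,
            show j + 1 + k = j + k + 1 by ring]
          ring

end BorelTransform

theorem laguerre_convolution_general (m n : ℕ) (X : ℝ) :
    ∫ t in (0 : ℝ)..X, laguerreFun m t * laguerreFun n (X - t) =
      laguerreFun (m + n) X - laguerreFun (m + n + 1) X := by
  simp_rw [laguerreFun_eq_borelTransform]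
  rw [integral_borelTransform_mul_borelTransform, ← Pi.sub_apply, ← map_sub, ← Pi.neg_apply,
    ← map_neg]
  exact congrArg (borelTransform · (-X)) (by ring)

theorem laguerre_convolution (m n : ℕ) (X : ℝ) (hX : 0 ≤ X) :
    ∫ t in (0 : ℝ)..X, laguerreFun m t * laguerreFun n (X - t) =
      laguerreFun (m + n) X - laguerreFun (m + n + 1) X :=
  laguerre_convolution_general m n X
end
end

section
/- For every n ∈ ℕ and all X ≥ 0, the alternating Laguerre sum is nonnegative: S_n(X) = Σ_{k=0}^n (−1)^k L_k(X) ≥ 0. -/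
/-!
Writing `X = s²`, we show `S_n(X) = ∑_{i+j=n} c_i He_j(s)² / j!`, where `He_j` are the
probabilists' Hermite polynomials and `c_i ≥ 0` the Taylor coefficients of `(1 - z²)^(-1/2)`;
every term is nonnegative. On generating functions this is Mehler's formula
`∑ He_j(s)² z^j / j! = (1 - z²)^(-1/2) e^(s² z / (1 + z))`, since
`∑ S_n(X) zⁿ = e^(X z / (1 + z)) / (1 - z²)`. We argue on coefficients instead: both sides,
each paired with a companion sequence (`∑_{i+j=n} c_i He_j(s) He_{j-1}(s) / (j-1)!`, resp.
`s ∑_{k<n} (-1)^k L_k^{(1)}(X)`), satisfy the same recurrence system with the same initial values.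
-/

open MeasureTheory

noncomputable section

/-- `S_n(X) = Σ_{k=0}^{n} (−1)^k L_k(X)`. -/
def Sfun (n : ℕ) (X : ℝ) : ℝ :=
  ∑ k ∈ Finset.range (n + 1), (-1 : ℝ) ^ k * laguerreFun k X

open Finset Polynomial
open scoped Nat

namespace Polynomial

theorem derivative_hermite_succ (n : ℕ) :
    derivative (hermite (n + 1)) = (n + 1 : ℤ[X]) * hermite n := by
  induction n with
  | zero => simp
  | succ n ih =>
    rw [hermite_succ (n + 1), derivative_sub, derivative_mul, ih, derivative_X,
      derivative_mul, hermite_succ n]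
    simp only [derivative_add, derivative_natCast, derivative_one]
    push_cast
    ring

theorem hermite_add_two (n : ℕ) :
    hermite (n + 2) = X * hermite (n + 1) - (n + 1 : ℤ[X]) * hermite n := by
  rw [hermite_succ (n + 1), derivative_hermite_succ]

end Polynomial

/-- The generalized Laguerre polynomial `L_k^{(1)}`. -/
def laguerreOne (k : ℕ) (x : ℝ) : ℝ :=
  ∑ j ∈ range (k + 1), ((k + 1).choose (j + 1) : ℝ) * (-x) ^ j / j !

theorem laguerreFun_succ_add_laguerreOne (k : ℕ) (x : ℝ) :
    laguerreFun (k + 1) x + laguerreOne k x = laguerreOne (k + 1) x := by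
  have h : laguerreOne k x
      = ∑ j ∈ range (k + 2), ((k + 1).choose (j + 1) : ℝ) * (-x) ^ j / j ! := by
    rw [laguerreOne, sum_range_succ _ (k + 1), Nat.choose_succ_self]; simp
  rw [laguerreFun, h, laguerreOne, ← sum_add_distrib]
  refine sum_congr rfl fun j _ => ?_
  rw [Nat.choose_succ_succ' (k + 1) j]
  push_cast
  ring

theorem laguerreFun_sub_succ (k : ℕ) (x : ℝ) :
    ((k : ℝ) + 1) * (laguerreFun k x - laguerreFun (k + 1) x) = x * laguerreOne k x := by
  have hk : laguerreFun k x = ∑ j ∈ range (k + 2), (k.choose j : ℝ) * (-x) ^ j / j ! := by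
    rw [laguerreFun, sum_range_succ _ (k + 1), Nat.choose_succ_self]; simp
  have hdiff : laguerreFun (k + 1) x - laguerreFun k x
      = ∑ j ∈ range (k + 1), (k.choose j : ℝ) * (-x) ^ (j + 1) / (j + 1)! := by
    rw [laguerreFun, hk, ← sum_sub_distrib, sum_range_succ']
    simp only [Nat.choose_zero_right, sub_self, add_zero]
    refine sum_congr rfl fun j _ => ?_
    rw [Nat.choose_succ_succ' k j]
    push_cast
    ring
  rw [← neg_sub, mul_neg, hdiff, mul_sum, laguerreOne, mul_sum, ← sum_neg_distrib]
  refine sum_congr rfl fun j _ => ?_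
  have habs : ((k : ℝ) + 1) * k.choose j = (k + 1).choose (j + 1) * ((j : ℝ) + 1) := by
    exact_mod_cast Nat.add_one_mul_choose_eq k j
  rw [Nat.factorial_succ]
  push_cast
  field_simp
  linear_combination (-(-x) ^ (j + 1)) * habs

def altLaguerreOneSum (n : ℕ) (x : ℝ) : ℝ :=
  ∑ k ∈ range n, (-1) ^ k * laguerreOne k x

theorem Sfun_eq_altLaguerreOneSum_add (n : ℕ) (x : ℝ) :
    Sfun n x = altLaguerreOneSum (n + 1) x + altLaguerreOneSum n x := by
  induction n with
  | zero => simp [Sfun, altLaguerreOneSum, laguerreFun, laguerreOne]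
  | succ n ih =>
    rw [Sfun, sum_range_succ, ← Sfun, ih]
    simp only [altLaguerreOneSum, sum_range_succ]
    rw [← laguerreFun_succ_add_laguerreOne, pow_succ]
    ring

theorem Sfun_add_two (n : ℕ) (x : ℝ) :
    ((n : ℝ) + 2) * Sfun (n + 2) x
      = ((n : ℝ) + 2) * Sfun n x + x * Sfun (n + 1) x - 2 * x * altLaguerreOneSum (n + 1) x := by
  have hS : Sfun (n + 2) x
      = Sfun n x + (-1) ^ (n + 1) * (laguerreFun (n + 1) x - laguerreFun (n + 2) x) := by
    rw [Sfun, sum_range_succ, sum_range_succ, ← Sfun, pow_succ _ (n + 1)]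
    ring
  have hT : Sfun (n + 1) x - 2 * altLaguerreOneSum (n + 1) x
      = (-1) ^ (n + 1) * laguerreOne (n + 1) x := by
    rw [Sfun_eq_altLaguerreOneSum_add, altLaguerreOneSum, sum_range_succ, ← altLaguerreOneSum]
    ring
  have hL := laguerreFun_sub_succ (n + 1) x
  push_cast at hL
  linear_combination ((n : ℝ) + 2) * hS + (-1) ^ (n + 1) * hL - x * hT

section Hermite

variable (s : ℝ)

def hermiteSq (k : ℕ) : ℝ := aeval s (hermite k) ^ 2 / k !

def hermiteCross : ℕ → ℝ
  | 0 => 0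
  | k + 1 => aeval s (hermite (k + 1)) * aeval s (hermite k) / k !

theorem hermiteCross_succ (k : ℕ) :
    hermiteCross s (k + 1) = s * hermiteSq s k - hermiteCross s k := by
  cases k with
  | zero => simp [hermiteCross, hermiteSq]
  | succ k =>
    simp only [hermiteCross, hermiteSq, hermite_add_two, map_sub, map_mul, aeval_X, map_add,
      map_natCast, map_one, Nat.factorial_succ]
    push_cast
    field_simp

theorem hermiteSq_succ (k : ℕ) :
    ((k : ℝ) + 1) * hermiteSq s (k + 1)
      = s ^ 2 * hermiteSq s k - 2 * s * hermiteCross s k + k * hermiteSq s (k - 1) := by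
  cases k with
  | zero => simp [hermiteCross, hermiteSq]
  | succ k =>
    simp only [hermiteCross, hermiteSq, hermite_add_two, map_sub, map_mul, aeval_X, map_add,
      map_natCast, map_one, Nat.factorial_succ, Nat.add_sub_cancel]
    push_cast
    field_simp
    ring

/-- The Taylor coefficients of `(1 - z²)^(-1/2)`: `binom(2j, j) / 4^j` at `m = 2j`, zero at odd
`m`. -/
def centralCoeff : ℕ → ℝ
  | 0 => 1
  | 1 => 0
  | m + 2 => (m + 1) / (m + 2) * centralCoeff m

theorem centralCoeff_nonneg : ∀ m, 0 ≤ centralCoeff m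
  | 0 => zero_le_one
  | 1 => le_rfl
  | m + 2 => mul_nonneg (by positivity) (centralCoeff_nonneg m)

theorem centralCoeff_add_two (m : ℕ) :
    ((m : ℝ) + 2) * centralCoeff (m + 2) = (m + 1) * centralCoeff m := by
  rw [centralCoeff]
  field_simp

def hermiteSqConv (n : ℕ) : ℝ := ∑ p ∈ antidiagonal n, centralCoeff p.1 * hermiteSq s p.2

def hermiteCrossConv (n : ℕ) : ℝ :=
  ∑ p ∈ antidiagonal n, centralCoeff p.1 * hermiteCross s p.2

theorem hermiteSqConv_nonneg (n : ℕ) : 0 ≤ hermiteSqConv s n :=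
  sum_nonneg fun p _ => mul_nonneg (centralCoeff_nonneg _) (by unfold hermiteSq; positivity)

theorem hermiteCrossConv_succ (n : ℕ) :
    hermiteCrossConv s (n + 1) = s * hermiteSqConv s n - hermiteCrossConv s n := by
  rw [hermiteCrossConv, Nat.sum_antidiagonal_succ', hermiteSqConv, hermiteCrossConv, mul_sum,
    ← sum_sub_distrib]
  simp only [hermiteCross.eq_1, mul_zero, zero_add]
  refine sum_congr rfl fun p _ => ?_
  rw [hermiteCross_succ]
  ring

theorem sum_antidiagonal_add_two_fst_mul_centralCoeff (f : ℕ → ℝ) (n : ℕ) :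
    ∑ p ∈ antidiagonal (n + 2), p.1 * centralCoeff p.1 * f p.2
      = ∑ p ∈ antidiagonal n, ((p.1 : ℝ) + 1) * centralCoeff p.1 * f p.2 := by
  rw [Nat.sum_antidiagonal_succ, Nat.sum_antidiagonal_succ]
  simp only [centralCoeff.eq_2, Nat.cast_zero, zero_mul, mul_zero, zero_add]
  refine sum_congr rfl fun p _ => ?_
  rw [← centralCoeff_add_two]
  push_cast
  ring

theorem sum_antidiagonal_add_two_mul_snd_hermiteSq (a : ℕ → ℝ) (n : ℕ) :
    ∑ p ∈ antidiagonal (n + 2), a p.1 * (p.2 * hermiteSq s p.2)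
      = ∑ p ∈ antidiagonal (n + 1),
          a p.1 * (s ^ 2 * hermiteSq s p.2 - 2 * s * hermiteCross s p.2)
        + ∑ p ∈ antidiagonal n, a p.1 * (((p.2 : ℝ) + 1) * hermiteSq s p.2) := by
  have hshift : ∑ p ∈ antidiagonal (n + 1), a p.1 * (p.2 * hermiteSq s (p.2 - 1))
      = ∑ p ∈ antidiagonal n, a p.1 * (((p.2 : ℝ) + 1) * hermiteSq s p.2) := by
    rw [Nat.sum_antidiagonal_succ']
    simp
  rw [Nat.sum_antidiagonal_succ', ← hshift, ← sum_add_distrib]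
  simp only [Nat.cast_zero, zero_mul, mul_zero, zero_add]
  refine sum_congr rfl fun p _ => ?_
  rw [Nat.cast_succ, hermiteSq_succ]
  ring

theorem hermiteSqConv_add_two (n : ℕ) :
    ((n : ℝ) + 2) * hermiteSqConv s (n + 2)
      = ((n : ℝ) + 2) * hermiteSqConv s n + s ^ 2 * hermiteSqConv s (n + 1)
        - 2 * s * hermiteCrossConv s (n + 1) := by
  have hsplit : ((n : ℝ) + 2) * hermiteSqConv s (n + 2)
      = ∑ p ∈ antidiagonal (n + 2), p.1 * centralCoeff p.1 * hermiteSq s p.2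
        + ∑ p ∈ antidiagonal (n + 2), centralCoeff p.1 * (p.2 * hermiteSq s p.2) := by
    rw [hermiteSqConv, mul_sum, ← sum_add_distrib]
    refine sum_congr rfl fun p hp => ?_
    have hn : (n : ℝ) + 2 = p.1 + p.2 := by exact_mod_cast (mem_antidiagonal.mp hp).symm
    rw [hn]
    ring
  have hrecombine : ∑ p ∈ antidiagonal n, ((p.1 : ℝ) + 1) * centralCoeff p.1 * hermiteSq s p.2
      + ∑ p ∈ antidiagonal n, centralCoeff p.1 * (((p.2 : ℝ) + 1) * hermiteSq s p.2)
      = ((n : ℝ) + 2) * hermiteSqConv s n := by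
    rw [hermiteSqConv, mul_sum, ← sum_add_distrib]
    refine sum_congr rfl fun p hp => ?_
    have hn : (n : ℝ) = p.1 + p.2 := by exact_mod_cast (mem_antidiagonal.mp hp).symm
    rw [hn]
    ring
  have hmid : ∑ p ∈ antidiagonal (n + 1),
        centralCoeff p.1 * (s ^ 2 * hermiteSq s p.2 - 2 * s * hermiteCross s p.2)
      = s ^ 2 * hermiteSqConv s (n + 1) - 2 * s * hermiteCrossConv s (n + 1) := by
    rw [hermiteSqConv, hermiteCrossConv, mul_sum, mul_sum, ← sum_sub_distrib]
    exact sum_congr rfl fun p _ => by ring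
  rw [hsplit, sum_antidiagonal_add_two_fst_mul_centralCoeff,
    sum_antidiagonal_add_two_mul_snd_hermiteSq, hmid]
  linear_combination hrecombine

theorem hermiteConv_eq_laguerreSums (n : ℕ) :
    hermiteSqConv s n = Sfun n (s ^ 2) ∧ hermiteSqConv s (n + 1) = Sfun (n + 1) (s ^ 2)
      ∧ hermiteCrossConv s n = s * altLaguerreOneSum n (s ^ 2) := by
  induction n with
  | zero =>
    refine ⟨?_, ?_, ?_⟩ <;>
      simp [hermiteSqConv, hermiteCrossConv, hermiteSq, hermiteCross, centralCoeff, Sfun,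
        laguerreFun, altLaguerreOneSum, Nat.sum_antidiagonal_succ, sum_range_succ]
  | succ n ih =>
    obtain ⟨hP, hP', hQ⟩ := ih
    have hQ' : hermiteCrossConv s (n + 1) = s * altLaguerreOneSum (n + 1) (s ^ 2) := by
      rw [hermiteCrossConv_succ, hP, hQ, Sfun_eq_altLaguerreOneSum_add]
      ring
    refine ⟨hP', ?_, hQ'⟩
    have hn : ((n : ℝ) + 2) ≠ 0 := by positivity
    apply mul_left_cancel₀ hn
    rw [hermiteSqConv_add_two, Sfun_add_two, hP, hP', hQ']
    ring

end Hermite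

theorem S_nonneg (n : ℕ) (X : ℝ) (hX : 0 ≤ X) : 0 ≤ Sfun n X := by
  rw [← Real.sq_sqrt hX, ← (hermiteConv_eq_laguerreSums _ n).1]
  exact hermiteSqConv_nonneg _ n
end
end
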